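/- Let n ≥ 1, let α : Fin (n+1) → ℝ be strictly positive, set A = ∑_k α_k, and fix i : Fin n. With S_n = {x : Fin n → ℝ | (∀ j, 0 < x_j) ∧ ∑_j x_j < 1} ⊆ ℝ^n with Lebesgue measure, and writing the Dirichlet weight W(x) = (∏_{j : Fin n} x_j^{α_j − 1}) · (1 − ∑_j x_j)^{α_n − 1} where α_n is the value of α at the last index: (∫_{S_n} log(x_i) · W(x) dx) / (∫_{S_n} W(x) dx) = Γ′(α_i)/Γ(α_i) − Γ′(A)/Γ(A). (The expectation of the log of a Dirichlet coordinate is the difference of digamma values Ψ₀(α_i) − Ψ₀(A).) -/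

import Mathlib

/-!
Integrating out every coordinate except `x i` (Tonelli over `Fin.insertNth i`, then the
substitution `y = (1 - t) • z` in the remaining ones) factors `∫_{S_{m+1}} g (x i) W(x) dx` as
`∫₀¹ g(t) t^(a-1) (1-t)^(A-a-1) dt` times a Dirichlet integral in one dimension less, where
`a = α i`. The latter is positive (by induction, from the same factorization) and cancels from
the ratio, so the claim becomes the one-dimensional identity
`∫₀¹ log t · t^(a-1) (1-t)^(b-1) dt = B(a,b) (Ψ₀(a) - Ψ₀(a+b))`, which is
`∂ₐ B(a,b)` computed once under the integral sign and once from `B = Γ(a)Γ(b)/Γ(a+b)`.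
-/

open Real MeasureTheory Finset ProbabilityTheory
open scoped ENNReal

noncomputable section

def betaWeight (a b t : ℝ) : ℝ := t ^ (a - 1) * (1 - t) ^ (b - 1)

@[fun_prop]
lemma measurable_betaWeight (a b : ℝ) : Measurable (betaWeight a b) := by
  unfold betaWeight; fun_prop

lemma betaWeight_nonneg (a b : ℝ) {t : ℝ} (ht : t ∈ Set.Ioo 0 1) : 0 ≤ betaWeight a b t :=
  mul_nonneg (rpow_nonneg ht.1.le _) (rpow_nonneg (sub_nonneg.2 ht.2.le) _)

lemma lintegral_betaWeight {a b : ℝ} (ha : 0 < a) (hb : 0 < b) :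
    ∫⁻ t in Set.Ioo 0 1, ENNReal.ofReal (betaWeight a b t) = ENNReal.ofReal (beta a b) := by
  have hβ := beta_pos ha hb
  have hnorm : ENNReal.ofReal (1 / beta a b) *
      ∫⁻ t in Set.Ioo 0 1, ENNReal.ofReal (betaWeight a b t) = 1 := by
    rw [← lintegral_const_mul' _ _ ENNReal.ofReal_ne_top, ← lintegral_betaPDF_eq_one ha hb,
      lintegral_betaPDF]
    refine setLIntegral_congr_fun measurableSet_Ioo fun t _ => ?_
    rw [← ENNReal.ofReal_mul (by positivity), betaWeight, mul_assoc]
  calc ∫⁻ t in Set.Ioo 0 1, ENNReal.ofReal (betaWeight a b t)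
      = ENNReal.ofReal (beta a b) * (ENNReal.ofReal (1 / beta a b) *
          ∫⁻ t in Set.Ioo 0 1, ENNReal.ofReal (betaWeight a b t)) := by
        rw [← mul_assoc, ← ENNReal.ofReal_mul hβ.le, mul_one_div_cancel hβ.ne',
          ENNReal.ofReal_one, one_mul]
    _ = ENNReal.ofReal (beta a b) := by rw [hnorm, mul_one]

lemma integrableOn_betaWeight {a b : ℝ} (ha : 0 < a) (hb : 0 < b) :
    IntegrableOn (betaWeight a b) (Set.Ioo 0 1) := by
  refine ⟨(measurable_betaWeight a b).aestronglyMeasurable, ?_⟩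
  rw [hasFiniteIntegral_iff_ofReal (ae_restrict_of_forall_mem measurableSet_Ioo
    fun t => betaWeight_nonneg a b), lintegral_betaWeight ha hb]
  exact ENNReal.ofReal_lt_top

lemma integral_betaWeight {a b : ℝ} (ha : 0 < a) (hb : 0 < b) :
    ∫ t in Set.Ioo 0 1, betaWeight a b t = beta a b := by
  rw [integral_eq_lintegral_of_nonneg_ae (ae_restrict_of_forall_mem measurableSet_Ioo
    fun t => betaWeight_nonneg a b) (measurable_betaWeight a b).aestronglyMeasurable,
    lintegral_betaWeight ha hb, ENNReal.toReal_ofReal (beta_pos ha hb).le]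

lemma neg_log_le_rpow_neg_div {t ε : ℝ} (ht : 0 < t) (hε : 0 < ε) :
    -log t ≤ t ^ (-ε) / ε := by
  simpa [log_inv, inv_rpow ht.le, rpow_neg ht.le] using log_le_rpow_div (inv_pos.2 ht).le hε

lemma norm_log_mul_betaWeight_le {a s b t : ℝ} (ha : 0 < a) (hs : a / 2 ≤ s)
    (ht : t ∈ Set.Ioo 0 1) : ‖log t * betaWeight s b t‖ ≤ 4 / a * betaWeight (a / 4) b t := by
  have hw : betaWeight s b t ≤ betaWeight (a / 2) b t :=
    mul_le_mul_of_nonneg_right (rpow_le_rpow_of_exponent_ge ht.1 ht.2.le (by linarith))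
      (rpow_nonneg (sub_nonneg.2 ht.2.le) _)
  calc ‖log t * betaWeight s b t‖ = -log t * betaWeight s b t := by
        rw [norm_mul, norm_of_nonneg (betaWeight_nonneg s b ht), norm_eq_abs,
          abs_of_nonpos (log_nonpos ht.1.le ht.2.le)]
    _ ≤ t ^ (-(a / 4)) / (a / 4) * betaWeight (a / 2) b t :=
        mul_le_mul (neg_log_le_rpow_neg_div ht.1 (by positivity)) hw
          (betaWeight_nonneg s b ht) (div_nonneg (rpow_nonneg ht.1.le _) (by positivity))
    _ = 4 / a * betaWeight (a / 4) b t := by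
        have hpow : t ^ (-(a / 4)) * t ^ (a / 2 - 1) = t ^ (a / 4 - 1) := by
          rw [← rpow_add ht.1]; ring_nf
        rw [betaWeight, betaWeight, ← hpow]
        field_simp

lemma hasDerivAt_betaWeight_left (b : ℝ) {t : ℝ} (ht : 0 < t) (s : ℝ) :
    HasDerivAt (fun s => betaWeight s b t) (log t * betaWeight s b t) s := by
  have := (((hasStrictDerivAt_const_rpow ht (s - 1)).hasDerivAt).comp s
    ((hasDerivAt_id s).sub_const 1)).mul_const ((1 - t) ^ (b - 1))
  simpa [betaWeight, Function.comp_def, mul_comm, mul_left_comm, mul_assoc] using this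

lemma hasDerivAt_integral_betaWeight_left {a b : ℝ} (ha : 0 < a) (hb : 0 < b) :
    HasDerivAt (fun s => ∫ t in Set.Ioo 0 1, betaWeight s b t)
      (∫ t in Set.Ioo 0 1, log t * betaWeight a b t) a := by
  have hbound : ∀ t ∈ Set.Ioo (0 : ℝ) 1, ∀ s ∈ Metric.ball a (a / 2),
      ‖log t * betaWeight s b t‖ ≤ 4 / a * betaWeight (a / 4) b t := fun t ht s hs => by
    rw [Metric.mem_ball, dist_eq, abs_lt] at hs
    exact norm_log_mul_betaWeight_le ha (by linarith [hs.1]) ht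
  exact (hasDerivAt_integral_of_dominated_loc_of_deriv_le (F := fun s t => betaWeight s b t)
    (F' := fun s t => log t * betaWeight s b t)
    (bound := fun t => 4 / a * betaWeight (a / 4) b t)
    (Metric.ball_mem_nhds a (half_pos ha))
    (.of_forall fun s => (measurable_betaWeight s b).aestronglyMeasurable)
    (integrableOn_betaWeight ha hb)
    ((measurable_log.mul (measurable_betaWeight a b)).aestronglyMeasurable)
    (ae_restrict_of_forall_mem measurableSet_Ioo hbound)
    ((integrableOn_betaWeight (by positivity) hb).const_mul _)
    (ae_restrict_of_forall_mem measurableSet_Ioo fun t ht s _ =>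
      hasDerivAt_betaWeight_left b ht.1 s)).2

lemma hasDerivAt_Gamma_of_pos {s : ℝ} (hs : 0 < s) : HasDerivAt Gamma (deriv Gamma s) s :=
  (differentiableAt_Gamma fun m h => by
    linarith [h ▸ hs, (m.cast_nonneg : (0 : ℝ) ≤ m)]).hasDerivAt

lemma hasDerivAt_beta_left {a b : ℝ} (ha : 0 < a) (hb : 0 < b) :
    HasDerivAt (fun s => beta s b)
      (beta a b * (deriv Gamma a / Gamma a - deriv Gamma (a + b) / Gamma (a + b))) a := by
  have hGab := Gamma_pos_of_pos (add_pos ha hb)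
  refine (((hasDerivAt_Gamma_of_pos ha).mul_const (Gamma b)).div
    ((hasDerivAt_Gamma_of_pos (add_pos ha hb)).comp_add_const a b) hGab.ne').congr_deriv ?_
  simp only [beta]
  field_simp

lemma integral_log_mul_betaWeight {a b : ℝ} (ha : 0 < a) (hb : 0 < b) :
    ∫ t in Set.Ioo 0 1, log t * betaWeight a b t =
      beta a b * (deriv Gamma a / Gamma a - deriv Gamma (a + b) / Gamma (a + b)) :=
  (hasDerivAt_integral_betaWeight_left ha hb).unique <|
    (hasDerivAt_beta_left ha hb).congr_of_eventuallyEq <|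
      (eventually_gt_nhds ha).mono fun _ hs => integral_betaWeight hs hb

lemma integral_log_mul_betaWeight_div {a b : ℝ} (ha : 0 < a) (hb : 0 < b) :
    (∫ t in Set.Ioo 0 1, log t * betaWeight a b t) / ∫ t in Set.Ioo 0 1, betaWeight a b t =
      deriv Gamma a / Gamma a - deriv Gamma (a + b) / Gamma (a + b) := by
  rw [integral_log_mul_betaWeight ha hb, integral_betaWeight ha hb,
    mul_div_cancel_left₀ _ (beta_pos ha hb).ne']

theorem lintegral_eq_ofReal_pow_mul_lintegral_comp_smul {E : Type*} [NormedAddCommGroup E]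
    [NormedSpace ℝ E] [MeasurableSpace E] [BorelSpace E] [FiniteDimensional ℝ E]
    (μ : Measure E) [μ.IsAddHaarMeasure] (f : E → ℝ≥0∞) {r : ℝ} (hr : 0 < r) :
    ∫⁻ x, f x ∂μ = ENNReal.ofReal (r ^ Module.finrank ℝ E) * ∫⁻ x, f (r • x) ∂μ := by
  have hrd : 0 < r ^ Module.finrank ℝ E := pow_pos hr _
  have hmap : ∫⁻ x, f (r • x) ∂μ = ∫⁻ x, f x ∂(Measure.map (r • ·) μ) :=
    (lintegral_map_equiv f (MeasurableEquiv.smul₀ r hr.ne')).symm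
  rw [hmap, Measure.map_addHaar_smul μ hr.ne', lintegral_smul_measure, smul_eq_mul, ← mul_assoc,
    abs_of_pos (inv_pos.2 hrd), ← ENNReal.ofReal_mul hrd.le, mul_inv_cancel₀ hrd.ne',
    ENNReal.ofReal_one, one_mul]

def openSimplex (m : ℕ) : Set (Fin m → ℝ) := {x | (∀ j, 0 < x j) ∧ ∑ j, x j < 1}

def dirichletWeight {m : ℕ} (b : Fin m → ℝ) (c : ℝ) (x : Fin m → ℝ) : ℝ :=
  (∏ j, x j ^ (b j - 1)) * (1 - ∑ j, x j) ^ (c - 1)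

lemma measurableSet_openSimplex (m : ℕ) : MeasurableSet (openSimplex m) := by
  simp only [openSimplex, Set.ofPred_and, Set.ofPred_forall]
  exact (MeasurableSet.iInter fun j =>
      measurableSet_lt measurable_const (measurable_pi_apply j)).inter
    (measurableSet_lt (by fun_prop) measurable_const)

@[fun_prop]
lemma measurable_dirichletWeight {m : ℕ} (b : Fin m → ℝ) (c : ℝ) :
    Measurable (dirichletWeight b c) := by
  unfold dirichletWeight; fun_prop

lemma dirichletWeight_nonneg {m : ℕ} (b : Fin m → ℝ) (c : ℝ) {x : Fin m → ℝ}
    (hx : x ∈ openSimplex m) : 0 ≤ dirichletWeight b c x :=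
  mul_nonneg (prod_nonneg fun j _ => rpow_nonneg (hx.1 j).le _)
    (rpow_nonneg (sub_nonneg.2 hx.2.le) _)

lemma apply_mem_Ioo_of_mem_openSimplex {m : ℕ} {x : Fin m → ℝ} (hx : x ∈ openSimplex m)
    (i : Fin m) : x i ∈ Set.Ioo 0 1 :=
  ⟨hx.1 i, (single_le_sum (fun j _ => (hx.1 j).le) (mem_univ i)).trans_lt hx.2⟩

lemma insertNth_mem_openSimplex_iff {m : ℕ} (i : Fin (m + 1)) (t : ℝ) (y : Fin m → ℝ) :
    i.insertNth t y ∈ openSimplex (m + 1) ↔ 0 < t ∧ (∀ j, 0 < y j) ∧ t + ∑ j, y j < 1 := by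
  simp only [openSimplex, Set.mem_ofPred_eq, Fin.forall_iff_succAbove i, Fin.insertNth_apply_same,
    Fin.insertNth_apply_succAbove, Fin.sum_univ_succAbove _ i, and_assoc]

lemma insertNth_smul_mem_openSimplex_iff {m : ℕ} (i : Fin (m + 1)) {t : ℝ}
    (ht : t ∈ Set.Ioo 0 1) (z : Fin m → ℝ) :
    i.insertNth t ((1 - t) • z) ∈ openSimplex (m + 1) ↔ z ∈ openSimplex m := by
  have hr : 0 < 1 - t := sub_pos.2 ht.2
  rw [insertNth_mem_openSimplex_iff]
  simp only [Pi.smul_apply, smul_eq_mul, ← mul_sum, ht.1, true_and, openSimplex,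
    Set.mem_ofPred_eq, mul_pos_iff_of_pos_left hr]
  rw [← lt_sub_iff_add_lt', mul_lt_iff_lt_one_right hr]

lemma dirichletWeight_insertNth_smul {m : ℕ} (b : Fin (m + 1) → ℝ) (c : ℝ) (i : Fin (m + 1))
    {t : ℝ} (ht : t < 1) {z : Fin m → ℝ} (hz : z ∈ openSimplex m) :
    dirichletWeight b c (i.insertNth t ((1 - t) • z)) =
      t ^ (b i - 1) * (1 - t) ^ (∑ j, b (i.succAbove j) - m + c - 1) *
        dirichletWeight (fun j => b (i.succAbove j)) c z := by
  have hr : 0 < 1 - t := sub_pos.2 ht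
  have hprod : ∏ j, ((1 - t) * z j) ^ (b (i.succAbove j) - 1) =
      (1 - t) ^ (∑ j, b (i.succAbove j) - m) * ∏ j, z j ^ (b (i.succAbove j) - 1) := by
    simp only [mul_rpow hr.le (hz.1 _).le, prod_mul_distrib, ← rpow_sum_of_pos hr,
      sum_sub_distrib, sum_const, card_univ, Fintype.card_fin, nsmul_eq_mul, mul_one]
  have hlast : (1 - (t + (1 - t) * ∑ j, z j)) ^ (c - 1) =
      (1 - t) ^ (c - 1) * (1 - ∑ j, z j) ^ (c - 1) := by
    rw [← mul_rpow hr.le (sub_nonneg.2 hz.2.le)]; ring_nf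
  simp only [dirichletWeight, Fin.prod_univ_succAbove _ i, Fin.sum_univ_succAbove _ i,
    Fin.insertNth_apply_same, Fin.insertNth_apply_succAbove, Pi.smul_apply, smul_eq_mul,
    ← mul_sum, hprod, hlast, rpow_add hr, rpow_sub_one hr.ne']
  ring

lemma lintegral_indicator_insertNth_openSimplex {m : ℕ} (g : ℝ → ℝ≥0∞) (b : Fin (m + 1) → ℝ)
    (c : ℝ) (i : Fin (m + 1)) (t : ℝ) :
    ∫⁻ y, (openSimplex (m + 1)).indicator
        (fun x => g (x i) * ENNReal.ofReal (dirichletWeight b c x)) (i.insertNth t y) =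
      (Set.Ioo 0 1).indicator
          (fun t => g t * ENNReal.ofReal (betaWeight (b i) (∑ j, b (i.succAbove j) + c) t)) t *
        ∫⁻ z in openSimplex m,
          ENNReal.ofReal (dirichletWeight (fun j => b (i.succAbove j)) c z) := by
  by_cases ht : t ∈ Set.Ioo 0 1
  swap
  · have hout : ∀ y, i.insertNth t y ∉ openSimplex (m + 1) := fun y hy => by
      rw [insertNth_mem_openSimplex_iff] at hy
      exact ht ⟨hy.1, by linarith [hy.2.2, sum_nonneg fun j (_ : j ∈ univ) => (hy.2.1 j).le]⟩
    simp [Set.indicator_of_notMem (hout _), Set.indicator_of_notMem ht]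
  have hr : 0 < 1 - t := sub_pos.2 ht.2
  set C := g t * ENNReal.ofReal (t ^ (b i - 1) * (1 - t) ^ (∑ j, b (i.succAbove j) - m + c - 1))
  have hslice : ∀ z, (openSimplex (m + 1)).indicator
      (fun x => g (x i) * ENNReal.ofReal (dirichletWeight b c x)) (i.insertNth t ((1 - t) • z)) =
      (openSimplex m).indicator
        (fun z => C * ENNReal.ofReal (dirichletWeight (fun j => b (i.succAbove j)) c z)) z := by
    intro z
    by_cases hz : z ∈ openSimplex m
    · rw [Set.indicator_of_mem ((insertNth_smul_mem_openSimplex_iff i ht z).2 hz),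
        Set.indicator_of_mem hz, Fin.insertNth_apply_same,
        dirichletWeight_insertNth_smul b c i ht.2 hz,
        ENNReal.ofReal_mul (mul_nonneg (rpow_nonneg ht.1.le _) (rpow_nonneg hr.le _)), mul_assoc]
    · rw [Set.indicator_of_notMem (mt (insertNth_smul_mem_openSimplex_iff i ht z).1 hz),
        Set.indicator_of_notMem hz]
  rw [lintegral_eq_ofReal_pow_mul_lintegral_comp_smul volume _ hr, Module.finrank_fin_fun]
  simp only [hslice]
  rw [lintegral_indicator (measurableSet_openSimplex m), lintegral_const_mul _ (by fun_prop),
    Set.indicator_of_mem ht, ← mul_assoc, ← mul_assoc]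
  congr 1
  rw [mul_comm (ENNReal.ofReal _) (g t), mul_assoc, ← ENNReal.ofReal_mul (by positivity)]
  congr 2
  rw [betaWeight, ← rpow_natCast, mul_left_comm, ← rpow_add hr]
  ring_nf

theorem lintegral_comp_apply_mul_dirichletWeight {m : ℕ} (g : ℝ → ℝ≥0∞) (hg : Measurable g)
    (b : Fin (m + 1) → ℝ) (c : ℝ) (i : Fin (m + 1)) :
    ∫⁻ x in openSimplex (m + 1), g (x i) * ENNReal.ofReal (dirichletWeight b c x) =
      (∫⁻ t in Set.Ioo 0 1,
          g t * ENNReal.ofReal (betaWeight (b i) (∑ j, b (i.succAbove j) + c) t)) *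
        ∫⁻ z in openSimplex m,
          ENNReal.ofReal (dirichletWeight (fun j => b (i.succAbove j)) c z) := by
  have hmeas : Measurable ((openSimplex (m + 1)).indicator
      (fun x => g (x i) * ENNReal.ofReal (dirichletWeight b c x))) :=
    (by fun_prop : Measurable _).indicator (measurableSet_openSimplex _)
  rw [← lintegral_indicator (measurableSet_openSimplex _),
    ← (volume_preserving_piFinSuccAbove (fun _ => ℝ) i).symm.lintegral_comp_emb
      (MeasurableEquiv.measurableEmbedding _),
    Measure.volume_eq_prod,
    lintegral_prod _ (by exact (hmeas.comp (MeasurableEquiv.measurable _)).aemeasurable),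
    ← lintegral_indicator measurableSet_Ioo,
    ← lintegral_mul_const _ ((by fun_prop : Measurable _).indicator measurableSet_Ioo)]
  exact lintegral_congr fun t => lintegral_indicator_insertNth_openSimplex g b c i t

/-- No integrability assumption is needed: both sides are `toReal` of the two sides of
`lintegral_comp_apply_mul_dirichletWeight`, and `ENNReal.toReal` is multiplicative. -/
theorem integral_comp_apply_mul_dirichletWeight {m : ℕ} (g : ℝ → ℝ) (hg : Measurable g)
    (hg_nonneg : ∀ t ∈ Set.Ioo 0 1, 0 ≤ g t) (b : Fin (m + 1) → ℝ) (c : ℝ) (i : Fin (m + 1)) :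
    ∫ x in openSimplex (m + 1), g (x i) * dirichletWeight b c x =
      (∫ t in Set.Ioo 0 1, g t * betaWeight (b i) (∑ j, b (i.succAbove j) + c) t) *
        ∫ z in openSimplex m, dirichletWeight (fun j => b (i.succAbove j)) c z := by
  have hnonneg : ∀ x ∈ openSimplex (m + 1), 0 ≤ g (x i) * dirichletWeight b c x := fun x hx =>
    mul_nonneg (hg_nonneg _ (apply_mem_Ioo_of_mem_openSimplex hx i))
      (dirichletWeight_nonneg b c hx)
  rw [integral_eq_lintegral_of_nonneg_ae
      (ae_restrict_of_forall_mem (measurableSet_openSimplex _) hnonneg) (by fun_prop),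
    integral_eq_lintegral_of_nonneg_ae (ae_restrict_of_forall_mem measurableSet_Ioo fun t ht =>
      mul_nonneg (hg_nonneg t ht) (betaWeight_nonneg _ _ ht)) (by fun_prop),
    integral_eq_lintegral_of_nonneg_ae (ae_restrict_of_forall_mem (measurableSet_openSimplex _)
      fun z hz => dirichletWeight_nonneg _ c hz) (by fun_prop),
    ← ENNReal.toReal_mul]
  congr 1
  calc _ = ∫⁻ x in openSimplex (m + 1),
        ENNReal.ofReal (g (x i)) * ENNReal.ofReal (dirichletWeight b c x) :=
        setLIntegral_congr_fun (measurableSet_openSimplex _) fun x hx =>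
          ENNReal.ofReal_mul (hg_nonneg _ (apply_mem_Ioo_of_mem_openSimplex hx i))
    _ = _ := lintegral_comp_apply_mul_dirichletWeight (fun t => ENNReal.ofReal (g t))
        (by fun_prop) b c i
    _ = _ := by
        congr 1
        exact setLIntegral_congr_fun measurableSet_Ioo fun t ht =>
          (ENNReal.ofReal_mul (hg_nonneg t ht)).symm

theorem integral_dirichletWeight_pos : ∀ {m : ℕ} (b : Fin m → ℝ), (∀ j, 0 < b j) → ∀ {c : ℝ},
    0 < c → 0 < ∫ x in openSimplex m, dirichletWeight b c x
  | 0, b, _, c, _ => by simp [openSimplex, dirichletWeight]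
  | m + 1, b, hb, c, hc => by
    have hβ : 0 < ∑ j, b ((0 : Fin (m + 1)).succAbove j) + c :=
      add_pos_of_nonneg_of_pos (sum_nonneg fun j _ => (hb _).le) hc
    have h := integral_comp_apply_mul_dirichletWeight (fun _ => 1) measurable_const
      (fun _ _ => zero_le_one) b c 0
    simp only [one_mul] at h
    rw [h, integral_betaWeight (hb 0) hβ]
    exact mul_pos (beta_pos (hb 0) hβ) (integral_dirichletWeight_pos _ (fun j => hb _) hc)

theorem integral_log_mul_dirichletWeight_div {m : ℕ} (b : Fin (m + 1) → ℝ) (hb : ∀ j, 0 < b j)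
    {c : ℝ} (hc : 0 < c) (i : Fin (m + 1)) :
    (∫ x in openSimplex (m + 1), log (x i) * dirichletWeight b c x) /
        ∫ x in openSimplex (m + 1), dirichletWeight b c x =
      deriv Gamma (b i) / Gamma (b i) - deriv Gamma (∑ j, b j + c) / Gamma (∑ j, b j + c) := by
  set β := ∑ j, b (i.succAbove j) + c
  have hβ : 0 < β := add_pos_of_nonneg_of_pos (sum_nonneg fun j _ => (hb _).le) hc
  have hsum : ∑ j, b j + c = b i + β := by rw [Fin.sum_univ_succAbove b i]; ring
  have hlog := integral_comp_apply_mul_dirichletWeight (fun t => -log t) measurable_log.neg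
    (fun t ht => neg_nonneg.2 (log_nonpos ht.1.le ht.2.le)) b c i
  have hone := integral_comp_apply_mul_dirichletWeight (fun _ => 1) measurable_const
    (fun _ _ => zero_le_one) b c i
  simp only [neg_mul, integral_neg, neg_inj, one_mul] at hlog hone
  rw [hlog, hone, mul_div_mul_right _ _ (integral_dirichletWeight_pos _ (fun j => hb _) hc).ne',
    integral_log_mul_betaWeight_div (hb i) hβ, hsum]

end

theorem dirichlet_expectation_log_general
    (n : ℕ) (α : Fin (n + 1) → ℝ) (hα : ∀ k, 0 < α k)
    (A : ℝ) (hA : A = ∑ k, α k) (i : Fin n) :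
    (∫ x in {x : Fin n → ℝ | (∀ j, 0 < x j) ∧ ∑ j, x j < 1},
        Real.log (x i) *
          ((∏ j : Fin n, x j ^ (α j.castSucc - 1)) *
            (1 - ∑ j, x j) ^ (α (Fin.last n) - 1))) /
      (∫ x in {x : Fin n → ℝ | (∀ j, 0 < x j) ∧ ∑ j, x j < 1},
        (∏ j : Fin n, x j ^ (α j.castSucc - 1)) *
          (1 - ∑ j, x j) ^ (α (Fin.last n) - 1)) =
      deriv Real.Gamma (α i.castSucc) / Real.Gamma (α i.castSucc) -
        deriv Real.Gamma A / Real.Gamma A := by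
  obtain ⟨m, rfl⟩ := Nat.exists_eq_add_one_of_ne_zero i.pos.ne'
  rw [hA, Fin.sum_univ_castSucc]
  exact integral_log_mul_dirichletWeight_div (fun j => α j.castSucc) (fun j => hα _)
    (hα (Fin.last _)) i

/-- The expectation of the log of a Dirichlet coordinate is the difference of digamma
values `Ψ₀(α i) − Ψ₀(A)`. -/
theorem dirichlet_expectation_log
    (n : ℕ) (hn : 1 ≤ n) (α : Fin (n + 1) → ℝ) (hα : ∀ k, 0 < α k)
    (A : ℝ) (hA : A = ∑ k, α k) (i : Fin n) :
    (∫ x in {x : Fin n → ℝ | (∀ j, 0 < x j) ∧ ∑ j, x j < 1},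
        Real.log (x i) *
          ((∏ j : Fin n, x j ^ (α j.castSucc - 1)) *
            (1 - ∑ j, x j) ^ (α (Fin.last n) - 1))) /
      (∫ x in {x : Fin n → ℝ | (∀ j, 0 < x j) ∧ ∑ j, x j < 1},
        (∏ j : Fin n, x j ^ (α j.castSucc - 1)) *
          (1 - ∑ j, x j) ^ (α (Fin.last n) - 1)) =
      deriv Real.Gamma (α i.castSucc) / Real.Gamma (α i.castSucc) -
        deriv Real.Gamma A / Real.Gamma A :=
  dirichlet_expectation_log_general n α hα A hA i
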